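/- For every real σ with 1/2 < σ < 3/2 and every real X > 0: (1/2π) ∫_{−∞}^{∞} Γ(1/2 − σ + iy) · X^{1/2 − σ + iy} dy = e^{−1/X} − 1, where X^{1/2−σ+iy} = e^{(1/2−σ+iy) log X}. In particular the integral converges absolutely and is independent of σ in this range. -/

import Mathlib

/-!
Put `f t = e^{-t} - 1`. Integrating by parts against `t^s / s` turns the Mellin transform of `f`
into `Γ(s + 1) / s = Γ(s)` throughout the strip `-1 < Re s < 0`, where `f(t) = O(t)` at `0` and
`f = O(1)` at `∞` make both the integral and the boundary terms harmless. On a vertical line in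
that strip, `Γ(s) = Γ(s + 2) / (s (s + 1))` with `|Γ(s + 2)| ≤ Γ(Re s + 2)`, so `Γ` decays like
`|Im s|⁻²` and is integrable. Mellin inversion at `x = 1/X` then gives `f(1/X) = e^{-1/X} - 1`.
-/

open Complex Filter MeasureTheory Set Topology

namespace Complex

lemma norm_Gamma_le_Gamma_re {z : ℂ} (hz : 0 < z.re) : ‖Gamma z‖ ≤ Real.Gamma z.re := by
  rw [Gamma_eq_integral hz, Real.Gamma_eq_integral hz, GammaIntegral]
  refine norm_integral_le_of_norm_le (Real.GammaIntegral_convergent hz) ?_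
  filter_upwards [self_mem_ae_restrict measurableSet_Ioi] with t (ht : 0 < t)
  rw [norm_mul, norm_real, Real.norm_of_nonneg (Real.exp_pos _).le,
    norm_cpow_eq_rpow_re_of_pos ht, sub_re, one_re]

lemma Gamma_eq_Gamma_add_two_div {z : ℂ} (h₀ : z ≠ 0) (h₁ : z + 1 ≠ 0) :
    Gamma z = Gamma (z + 2) / (z * (z + 1)) := by
  rw [eq_div_iff (mul_ne_zero h₀ h₁), show z + 2 = z + 1 + 1 by ring,
    Gamma_add_one _ h₁, Gamma_add_one _ h₀]
  ring

lemma sq_mul_one_add_sq_le_norm_sq {m : ℝ} (hm₀ : 0 ≤ m) (hm₁ : m ≤ 1) {w : ℂ}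
    (hw : m ≤ |w.re|) : m ^ 2 * (1 + w.im ^ 2) ≤ ‖w‖ ^ 2 := by
  rw [Complex.sq_norm, normSq_apply]
  nlinarith [sq_abs w.re, sq_nonneg w.im, mul_self_le_mul_self hm₀ hw,
    mul_le_one₀ hm₁ hm₀ hm₁]

lemma norm_Gamma_le_mul_inv_one_add_sq {σ : ℝ} (hσ : -2 < σ) (h₀ : σ ≠ 0) (h₁ : σ ≠ -1) :
    ∃ C, ∀ y : ℝ, ‖Gamma (σ + y * I)‖ ≤ C * (1 + y ^ 2)⁻¹ := by
  set m := min 1 (min |σ| |σ + 1|)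
  have hm : 0 < m :=
    lt_min one_pos (lt_min (abs_pos.2 h₀) (abs_pos.2 fun h => h₁ (by linarith)))
  refine ⟨Real.Gamma (σ + 2) / m ^ 2, fun y => ?_⟩
  set z : ℂ := σ + y * I
  have hpos : 0 < m ^ 2 * (1 + y ^ 2) := by positivity
  have hz : m ^ 2 * (1 + y ^ 2) ≤ ‖z‖ ^ 2 := by
    simpa [z] using sq_mul_one_add_sq_le_norm_sq hm.le (min_le_left _ _) (w := z) (by simp [z, m])
  have hz₁ : m ^ 2 * (1 + y ^ 2) ≤ ‖z + 1‖ ^ 2 := by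
    simpa [z] using
      sq_mul_one_add_sq_le_norm_sq hm.le (min_le_left _ _) (w := z + 1) (by simp [z, m])
  have hprod : m ^ 2 * (1 + y ^ 2) ≤ ‖z * (z + 1)‖ := by
    rw [norm_mul]
    refine le_of_sq_le_sq ?_ (by positivity)
    calc (m ^ 2 * (1 + y ^ 2)) ^ 2 = (m ^ 2 * (1 + y ^ 2)) * (m ^ 2 * (1 + y ^ 2)) := by ring
      _ ≤ ‖z‖ ^ 2 * ‖z + 1‖ ^ 2 := mul_le_mul hz hz₁ hpos.le (by positivity)
      _ = (‖z‖ * ‖z + 1‖) ^ 2 := by ring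
  have hz0 : z ≠ 0 := fun h => by rw [h, norm_zero] at hz; linarith
  have hz1 : z + 1 ≠ 0 := fun h => by rw [h, norm_zero] at hz₁; linarith
  have hnum : ‖Gamma (z + 2)‖ ≤ Real.Gamma (σ + 2) := by
    simpa [z] using norm_Gamma_le_Gamma_re (z := z + 2) (by simpa [z] using by linarith)
  rw [Gamma_eq_Gamma_add_two_div hz0 hz1, norm_div]
  calc ‖Gamma (z + 2)‖ / ‖z * (z + 1)‖ ≤ Real.Gamma (σ + 2) / (m ^ 2 * (1 + y ^ 2)) := by
        gcongr
        exact (norm_nonneg _).trans hnum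
    _ = Real.Gamma (σ + 2) / m ^ 2 * (1 + y ^ 2)⁻¹ := by field_simp

lemma verticalIntegrable_Gamma {σ : ℝ} (hσ : -2 < σ) (h₀ : σ ≠ 0) (h₁ : σ ≠ -1) :
    VerticalIntegrable Gamma σ := by
  obtain ⟨C, hC⟩ := norm_Gamma_le_mul_inv_one_add_sq hσ h₀ h₁
  have hcont : Continuous fun y : ℝ => Gamma (σ + y * I) := by
    refine continuous_iff_continuousAt.2 fun y => (continuousAt_Gamma _ fun n h => ?_).comp
      (by fun_prop)
    have hre : σ = -n := by simpa using congrArg re h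
    rcases n with _ | _ | n
    · exact h₀ (by simpa using hre)
    · exact h₁ (by simpa using hre)
    · push_cast at hre; linarith
  exact (integrable_inv_one_add_sq.const_mul C).mono' hcont.aestronglyMeasurable
    (.of_forall hC)

lemma ofReal_inv_cpow_neg {x : ℝ} (hx : 0 ≤ x) (s : ℂ) : ((x⁻¹ : ℝ) : ℂ) ^ (-s) = (x : ℂ) ^ s := by
  have harg : (x : ℂ).arg ≠ Real.pi := by
    rw [arg_ofReal_of_nonneg hx]; exact Real.pi_ne_zero.symm
  rw [ofReal_inv, inv_cpow _ _ harg, ← cpow_neg, neg_neg]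

lemma VerticalIntegrable.integrable_cpow_smul {E : Type*} [NormedAddCommGroup E]
    [NormedSpace ℂ E] {F : ℂ → E} {σ : ℝ} (hF : VerticalIntegrable F σ) {x : ℝ} (hx : 0 < x) :
    Integrable fun y : ℝ => (x : ℂ) ^ (-(σ + y * I)) • F (σ + y * I) := by
  refine hF.bdd_smul (x ^ (-σ)) ?_ (.of_forall fun y => ?_)
  · exact (Continuous.const_cpow (by fun_prop)
      (Or.inl (ofReal_ne_zero.2 hx.ne'))).aestronglyMeasurable
  · simp [norm_cpow_eq_rpow_re_of_pos hx]

end Complex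

lemma abs_exp_neg_sub_one_le_self {t : ℝ} (ht : 0 ≤ t) : |Real.exp (-t) - 1| ≤ t := by
  rw [abs_sub_comm, abs_of_nonneg (by simpa using Real.exp_le_one_iff.2 (neg_nonpos.2 ht))]
  linarith [Real.add_one_le_exp (-t)]

lemma abs_exp_neg_sub_one_le_one {t : ℝ} (ht : 0 ≤ t) : |Real.exp (-t) - 1| ≤ 1 := by
  rw [abs_sub_comm, abs_of_nonneg (by simpa using Real.exp_le_one_iff.2 (neg_nonpos.2 ht))]
  linarith [Real.exp_pos (-t)]

lemma mellinConvergent_exp_neg_sub_one {s : ℂ} (h₁ : -1 < s.re) (h₂ : s.re < 0) :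
    MellinConvergent (fun t : ℝ => ((Real.exp (-t) - 1 : ℝ) : ℂ)) s := by
  refine mellinConvergent_of_isBigO_rpow (a := 0) (b := -1)
    ((Continuous.locallyIntegrable (by fun_prop)).locallyIntegrableOn _) ?_ h₂ ?_ h₁
  · refine .of_bound 1 (eventually_ge_atTop 0 |>.mono fun t ht => ?_)
    simpa only [norm_real, Real.norm_eq_abs, neg_zero, Real.rpow_zero, norm_one, mul_one]
      using abs_exp_neg_sub_one_le_one ht
  · refine .of_bound 1 (eventually_mem_nhdsWithin.mono fun t (ht : 0 < t) => ?_)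
    simpa only [norm_real, Real.norm_eq_abs, neg_neg, Real.rpow_one, one_mul, abs_of_pos ht]
      using abs_exp_neg_sub_one_le_self ht.le

lemma tendsto_exp_neg_sub_one_mul_cpow_nhdsGT_zero {s : ℂ} (h : -1 < s.re) :
    Tendsto (fun t : ℝ => ((Real.exp (-t) - 1 : ℝ) : ℂ) * (t : ℂ) ^ s) (𝓝[>] 0) (𝓝 0) := by
  have hlim : Tendsto (fun t : ℝ => t ^ (s.re + 1)) (𝓝[>] 0) (𝓝 0) := by
    simpa [Real.zero_rpow (by linarith : s.re + 1 ≠ 0)] using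
      ((Real.continuousAt_rpow_const 0 (s.re + 1) (Or.inr (by linarith))).tendsto).mono_left
        nhdsWithin_le_nhds
  refine squeeze_zero_norm' (eventually_mem_nhdsWithin.mono fun t (ht : 0 < t) => ?_) hlim
  rw [norm_mul, norm_real, Real.norm_eq_abs, norm_cpow_eq_rpow_re_of_pos ht,
    Real.rpow_add_one ht.ne', mul_comm]
  exact mul_le_mul_of_nonneg_left (abs_exp_neg_sub_one_le_self ht.le) (by positivity)

lemma tendsto_exp_neg_sub_one_mul_cpow_atTop {s : ℂ} (h : s.re < 0) :
    Tendsto (fun t : ℝ => ((Real.exp (-t) - 1 : ℝ) : ℂ) * (t : ℂ) ^ s) atTop (𝓝 0) := by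
  have hlim : Tendsto (fun t : ℝ => t ^ s.re) atTop (𝓝 0) := by
    simpa using tendsto_rpow_neg_atTop (neg_pos.2 h)
  refine squeeze_zero_norm' ((eventually_gt_atTop 0).mono fun t ht => ?_) hlim
  rw [norm_mul, norm_real, Real.norm_eq_abs, norm_cpow_eq_rpow_re_of_pos ht]
  exact mul_le_of_le_one_left (by positivity) (abs_exp_neg_sub_one_le_one ht.le)

lemma mellin_exp_neg_sub_one {s : ℂ} (h₁ : -1 < s.re) (h₂ : s.re < 0) :
    mellin (fun t : ℝ => ((Real.exp (-t) - 1 : ℝ) : ℂ)) s = Gamma s := by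
  have hs : s ≠ 0 := by rintro rfl; simp at h₂
  have hu : ∀ t ∈ Ioi (0 : ℝ), HasDerivAt (fun t : ℝ => ((Real.exp (-t) - 1 : ℝ) : ℂ))
      (-(Real.exp (-t) : ℂ)) t := fun t _ => by
    simpa using (((Real.hasDerivAt_exp (-t)).comp t (hasDerivAt_neg t)).sub_const 1).ofReal_comp
  have hv : ∀ t ∈ Ioi (0 : ℝ), HasDerivAt (fun t : ℝ => (t : ℂ) ^ s / s) ((t : ℂ) ^ (s - 1)) t :=
    fun t ht => by
      simpa using hasDerivAt_ofReal_cpow_const' (ne_of_gt ht) (by simpa using hs : s - 1 ≠ -1)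
  have huv' : IntegrableOn (fun t : ℝ => ((Real.exp (-t) - 1 : ℝ) : ℂ) * (t : ℂ) ^ (s - 1))
      (Ioi 0) := by
    refine IntegrableOn.congr_fun (mellinConvergent_exp_neg_sub_one h₁ h₂) (fun t _ => ?_)
      measurableSet_Ioi
    exact (smul_eq_mul _ _).trans (mul_comm _ _)
  have hGamma := GammaIntegral_convergent (s := s + 1) (by simpa using by linarith)
  rw [add_sub_cancel_right] at hGamma
  have hu'v : IntegrableOn (fun t : ℝ => -(Real.exp (-t) : ℂ) * ((t : ℂ) ^ s / s)) (Ioi 0) := by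
    refine IntegrableOn.congr_fun (hGamma.const_mul (-s⁻¹)) (fun t _ => ?_) measurableSet_Ioi
    ring
  have hparts := integral_Ioi_mul_deriv_eq_deriv_mul hu hv huv' hu'v
    (by rw [Pi.mul_def]; simpa only [mul_div_assoc, zero_div] using
      (tendsto_exp_neg_sub_one_mul_cpow_nhdsGT_zero h₁).div_const s)
    (by rw [Pi.mul_def]; simpa only [mul_div_assoc, zero_div] using
      (tendsto_exp_neg_sub_one_mul_cpow_atTop h₂).div_const s)
  calc mellin (fun t : ℝ => ((Real.exp (-t) - 1 : ℝ) : ℂ)) s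
      = ∫ t in Ioi 0, ((Real.exp (-t) - 1 : ℝ) : ℂ) * (t : ℂ) ^ (s - 1) :=
        setIntegral_congr_fun measurableSet_Ioi fun t _ => (smul_eq_mul _ _).trans (mul_comm _ _)
    _ = GammaIntegral (s + 1) / s := by
        rw [hparts, GammaIntegral, add_sub_cancel_right, ← integral_div, sub_self, zero_sub,
          ← integral_neg]
        simp only [neg_mul, neg_neg, mul_div_assoc]
    _ = Gamma s := by
        rw [← Gamma_eq_integral (by simpa using by linarith), Gamma_add_one s hs,
          mul_div_cancel_left₀ _ hs]

/-- Mellin inversion: for `1/2 < σ < 3/2` and `X > 0`,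
`(1/2π) ∫_{-∞}^{∞} Γ(1/2-σ+iy) X^{1/2-σ+iy} dy = e^{-1/X} - 1`,
and the integral converges absolutely. -/
theorem gamma_mellin_inversion (σ X : ℝ) (hσ1 : 1 / 2 < σ) (hσ2 : σ < 3 / 2) (hX : 0 < X) :
    Integrable (fun y : ℝ =>
        Complex.Gamma (1/2 - σ + y * I) * (X : ℂ) ^ ((1/2 : ℂ) - σ + y * I)) ∧
      (1 / (2 * Real.pi) : ℂ) *
          ∫ y : ℝ, Complex.Gamma (1/2 - σ + y * I) * (X : ℂ) ^ ((1/2 : ℂ) - σ + y * I) =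
        ((Real.exp (-1 / X) - 1 : ℝ) : ℂ) := by
  set f : ℝ → ℂ := fun t => ((Real.exp (-t) - 1 : ℝ) : ℂ)
  have hσ₁ : -1 < 1 / 2 - σ := by linarith
  have hσ₂ : 1 / 2 - σ < 0 := by linarith
  have hmellin (y : ℝ) : mellin f ((1 / 2 - σ : ℝ) + y * I) = Gamma ((1 / 2 - σ : ℝ) + y * I) :=
    mellin_exp_neg_sub_one (by simpa using hσ₁) (by simpa using hσ₂)
  have hvert : VerticalIntegrable (mellin f) (1 / 2 - σ) :=
    (verticalIntegrable_Gamma (by linarith) hσ₂.ne (by linarith)).congr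
      (.of_forall fun y => (hmellin y).symm)
  have hintegrand (y : ℝ) : ((X⁻¹ : ℝ) : ℂ) ^ (-(((1 / 2 - σ : ℝ) : ℂ) + y * I)) •
      mellin f ((1 / 2 - σ : ℝ) + y * I) =
      Gamma (1 / 2 - σ + y * I) * (X : ℂ) ^ ((1 / 2 : ℂ) - σ + y * I) := by
    rw [hmellin, smul_eq_mul, ofReal_inv_cpow_neg hX.le, mul_comm]
    push_cast
    ring_nf
  have hinv := mellinInv_mellin_eq (1 / 2 - σ) f (inv_pos.2 hX)
    (mellinConvergent_exp_neg_sub_one (by simpa using hσ₁) (by simpa using hσ₂)) hvert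
    (by fun_prop : Continuous f).continuousAt
  refine ⟨(hvert.integrable_cpow_smul (inv_pos.2 hX)).congr (.of_forall hintegrand), ?_⟩
  simp only [mellinInv, hintegrand] at hinv
  rw [neg_div, one_div X]
  change _ = f X⁻¹
  rw [← hinv, real_smul]
  push_cast
  ring
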